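/- (Proposition 2.1, BSDE part.) Assume (A1) and that (A2) holds at the point x ∈ D. If (Ȳ¹, M̄¹) and (Ȳ², M̄²) are both solutions of the perpetual BSDE at x, then Ȳ¹ and Ȳ² are indistinguishable and M̄¹ and M̄² are indistinguishable. -/

import Mathlib

open MeasureTheory ProbabilityTheory Filter Set
open scoped ENNReal NNReal Classical

noncomputable section

namespace Perp

variable {Ω : Type*}

/-- Euclidean norm on `Fin d → ℝ`. -/
def enorm {d : ℕ} (x : Fin d → ℝ) : ℝ := Real.sqrt (∑ i, (x i) ^ 2)

/-- The open positive orthant `D`. -/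
def posOrth (d : ℕ) : Set (Fin d → ℝ) := {x | ∀ i, 0 < x i}

/-- Assumption (A1): `ψ` is nonnegative, convex and Lipschitz with constant `L`. -/
structure A1 {d : ℕ} (ψ : (Fin d → ℝ) → ℝ) (L : ℝ) : Prop where
  nonneg : ∀ x, 0 ≤ ψ x
  convex : ConvexOn ℝ Set.univ ψ
  lip : ∀ x y, |ψ x - ψ y| ≤ L * enorm (x - y)

/-- `B` is a standard `d`-dimensional Brownian motion with respect to the filtration `F`:
independent coordinates, continuous paths started at `0`, adapted to `F`, Gaussian increments
that are independent of the past. -/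
def IsStdBM {d : ℕ} [mΩ : MeasurableSpace Ω] (P : Measure Ω) (F : Filtration ℝ mΩ)
    (B : Fin d → ℝ → Ω → ℝ) : Prop :=
  (∀ i ω, B i 0 ω = 0) ∧
  (∀ i ω, Continuous fun t => B i t ω) ∧
  (∀ i, Adapted F (fun t => B i t)) ∧
  (∀ s t : ℝ, 0 ≤ s → s ≤ t →
    Indep (MeasurableSpace.comap (fun ω => fun i => B i t ω - B i s ω) inferInstance) (F s) P) ∧
  (∀ i, ∀ s t : ℝ, 0 ≤ s → s ≤ t →
    Measure.map (fun ω => B i t ω - B i s ω) P = gaussianReal 0 (Real.toNNReal (t - s))) ∧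
  iIndepFun (fun i ω => fun t : ℝ => B i t ω) P

/-- The Black–Scholes price process started at `x` at time `0`. -/
def price {d : ℕ} (r : ℝ) (δ : Fin d → ℝ) (a σm : Matrix (Fin d) (Fin d) ℝ)
    (B : Fin d → ℝ → Ω → ℝ) (x : Fin d → ℝ) (t : ℝ) (ω : Ω) : Fin d → ℝ :=
  fun i => x i * Real.exp ((r - δ i - a i i / 2) * t + ∑ j, σm i j * B j t ω)

/-- `Ψ = -rψ + L_BS ψ` at points of (pointwise second-order) twice differentiability, `0`
elsewhere. -/
def PsiFun {d : ℕ} (r : ℝ) (δ : Fin d → ℝ) (a : Matrix (Fin d) (Fin d) ℝ)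
    (ψ : (Fin d → ℝ) → ℝ) (x : Fin d → ℝ) : ℝ :=
  if DifferentiableAt ℝ ψ x ∧ DifferentiableAt ℝ (fderiv ℝ ψ) x then
    -r * ψ x + ∑ i, (r - δ i) * x i * fderiv ℝ ψ x (Pi.single i 1)
      + (1 / 2) * ∑ i, ∑ j,
          a i j * x i * x j * fderiv ℝ (fderiv ℝ ψ) x (Pi.single i 1) (Pi.single j 1)
  else 0

/-- `Ψ⁻ = max (-Ψ, 0)`. -/
def PsiMinus {d : ℕ} (r : ℝ) (δ : Fin d → ℝ) (a : Matrix (Fin d) (Fin d) ℝ)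
    (ψ : (Fin d → ℝ) → ℝ) (x : Fin d → ℝ) : ℝ :=
  max (-(PsiFun r δ a ψ x)) 0

/-- `Φ(x, y) = Ψ⁻(x) 1_{y ≤ ψ(x)}`. -/
def Phi {d : ℕ} (r : ℝ) (δ : Fin d → ℝ) (a : Matrix (Fin d) (Fin d) ℝ)
    (ψ : (Fin d → ℝ) → ℝ) (x : Fin d → ℝ) (y : ℝ) : ℝ :=
  PsiMinus r δ a ψ x * (if y ≤ ψ x then 1 else 0)

/-- Finite-horizon value `V_T` of the American option for the price process `X`. -/
def valueT {d : ℕ} [mΩ : MeasurableSpace Ω] (P : Measure Ω) (F : Filtration ℝ mΩ) (r : ℝ)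
    (X : ℝ → Ω → (Fin d → ℝ)) (ψ : (Fin d → ℝ) → ℝ) (T : ℝ) : ℝ :=
  sSup {v | ∃ τ : Ω → ℝ, IsStoppingTime F (fun ω => (τ ω : WithTop ℝ)) ∧ (∀ ω, τ ω ∈ Set.Icc 0 T) ∧
    v = ∫ ω, Real.exp (-r * τ ω) * ψ (X (τ ω) ω) ∂P}

/-- `[0,∞]`-valued stopping times. -/
def IsStoppingTimeE [mΩ : MeasurableSpace Ω] (F : Filtration ℝ mΩ) (τ : Ω → ℝ≥0∞) : Prop :=
  ∀ t : ℝ, 0 ≤ t → MeasurableSet[F t] {ω | τ ω ≤ ENNReal.ofReal t}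

/-- Perpetual value `V` of the American option for the price process `X`. -/
def valueInf {d : ℕ} [mΩ : MeasurableSpace Ω] (P : Measure Ω) (F : Filtration ℝ mΩ) (r : ℝ)
    (X : ℝ → Ω → (Fin d → ℝ)) (ψ : (Fin d → ℝ) → ℝ) : ℝ :=
  sSup {v | ∃ τ : Ω → ℝ≥0∞, IsStoppingTimeE F τ ∧
    v = ∫ ω, Set.indicator {ω' | τ ω' < ⊤}
      (fun ω' => Real.exp (-r * (τ ω').toReal) * ψ (X ((τ ω').toReal) ω')) ω ∂P}

/-- Assumption (A2) at the point `x` (for the price process `X` started at `x`). -/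
def A2at {d : ℕ} [mΩ : MeasurableSpace Ω] (P : Measure Ω) (r : ℝ) (δ : Fin d → ℝ)
    (a : Matrix (Fin d) (Fin d) ℝ) (ψ : (Fin d → ℝ) → ℝ) (X : ℝ → Ω → (Fin d → ℝ)) : Prop :=
  Tendsto (fun t : ℝ => ∫ ω, Real.exp (-r * t) * ψ (X t ω) ∂P) atTop (nhds 0) ∧
  (∫⁻ ω, ∫⁻ t in Set.Ioi (0 : ℝ),
      ENNReal.ofReal (Real.exp (-r * t) * PsiMinus r δ a ψ (X t ω)) ∂volume ∂P) < ⊤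

/-- Class (D): the family of values of `Y` at finite nonnegative stopping times is uniformly
integrable. -/
def ClassD [mΩ : MeasurableSpace Ω] (P : Measure Ω) (F : Filtration ℝ mΩ)
    (Y : ℝ → Ω → ℝ) : Prop :=
  UniformIntegrable
    (fun (τ : {τ : Ω → ℝ // IsStoppingTime F (fun ω => (τ ω : WithTop ℝ)) ∧ ∀ ω, 0 ≤ τ ω}) ω => Y (τ.1 ω) ω) 1 P

/-- Continuous local martingale property (via a localizing sequence of stopping times). -/
def IsLocalMartingale [mΩ : MeasurableSpace Ω] (P : Measure Ω) (F : Filtration ℝ mΩ)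
    (M : ℝ → Ω → ℝ) : Prop :=
  ∃ τ : ℕ → Ω → ℝ, (∀ n, IsStoppingTime F (fun ω => (τ n ω : WithTop ℝ))) ∧ (∀ n ω, 0 ≤ τ n ω) ∧
    (∀ n ω, τ n ω ≤ τ (n + 1) ω) ∧ (∀ ω, Tendsto (fun n => τ n ω) atTop atTop) ∧
    ∀ n, Martingale (fun t ω => M (min t (τ n ω)) ω) F P

/-- Solution of the perpetual BSDE (3.5) (with generator `Φf`) for the price process `X`. -/
structure BSDESol {d : ℕ} [mΩ : MeasurableSpace Ω] (P : Measure Ω) (F : Filtration ℝ mΩ)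
    (r : ℝ) (X : ℝ → Ω → (Fin d → ℝ)) (Φf : (Fin d → ℝ) → ℝ → ℝ)
    (Y M : ℝ → Ω → ℝ) : Prop where
  contY : ∀ ω, Continuous fun t => Y t ω
  contM : ∀ ω, Continuous fun t => M t ω
  adaptedY : Adapted F Y
  adaptedM : Adapted F M
  classD : ClassD P F Y
  locMart : IsLocalMartingale P F M
  M0 : ∀ ω, M 0 ω = 0
  intFin : ∀ᵐ ω ∂P, ∀ T : ℝ, 0 < T → IntegrableOn
    (fun s => Real.exp (-r * s) * Φf (X s ω) (Real.exp (r * s) * Y s ω)) (Set.Icc 0 T) volume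
  eqn : ∀ T : ℝ, 0 < T → ∀ᵐ ω ∂P, ∀ t ∈ Set.Icc (0 : ℝ) T,
    Y t ω = Y T ω
      + (∫ s in t..T, Real.exp (-r * s) * Φf (X s ω) (Real.exp (r * s) * Y s ω))
      - (M T ω - M t ω)
  limY : ∀ᵐ ω ∂P, Tendsto (fun T => Y T ω) atTop (nhds 0)

/-- Solution of the perpetual reflected BSDE (3.3) for the price process `X`, with lower
barrier `L̄_t = e^{-rt} ψ(X_t)`.  The minimality (Stieltjes) condition
`∫_0^T (Ȳ_t - L̄_t) dK̄_t = 0` is expressed equivalently (for continuous paths and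
continuous nondecreasing `K̄`) by: `K̄` is locally constant at every time where `Ȳ_t > L̄_t`. -/
structure RBSDESol {d : ℕ} [mΩ : MeasurableSpace Ω] (P : Measure Ω) (F : Filtration ℝ mΩ)
    (r : ℝ) (X : ℝ → Ω → (Fin d → ℝ)) (ψ : (Fin d → ℝ) → ℝ)
    (Y K M : ℝ → Ω → ℝ) : Prop where
  contY : ∀ ω, Continuous fun t => Y t ω
  contK : ∀ ω, Continuous fun t => K t ω
  contM : ∀ ω, Continuous fun t => M t ω
  adaptedY : Adapted F Y
  adaptedK : Adapted F K
  adaptedM : Adapted F M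
  classD : ClassD P F Y
  locMart : IsLocalMartingale P F M
  M0 : ∀ ω, M 0 ω = 0
  K0 : ∀ ω, K 0 ω = 0
  monoK : ∀ ω, MonotoneOn (fun t => K t ω) (Set.Ici 0)
  eqn : ∀ T : ℝ, 0 < T → ∀ᵐ ω ∂P, ∀ t ∈ Set.Icc (0 : ℝ) T,
    Y t ω = Y T ω + (K T ω - K t ω) - (M T ω - M t ω)
  barrier : ∀ᵐ ω ∂P, ∀ t : ℝ, 0 ≤ t → Real.exp (-r * t) * ψ (X t ω) ≤ Y t ω
  minimality : ∀ᵐ ω ∂P, ∀ t : ℝ, 0 ≤ t → Real.exp (-r * t) * ψ (X t ω) < Y t ω →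
    ∃ ε > 0, ∀ s ∈ Set.Icc (t - ε) (t + ε) ∩ Set.Ici (0 : ℝ), K s ω = K t ω
  limY : ∀ᵐ ω ∂P, Tendsto (fun T => Y T ω) atTop (nhds 0)

/-- The value function `V_T` as a function of the initial price. -/
def VTfun {d : ℕ} [mΩ : MeasurableSpace Ω] (P : Measure Ω) (F : Filtration ℝ mΩ)
    (r : ℝ) (δ : Fin d → ℝ) (a σm : Matrix (Fin d) (Fin d) ℝ) (B : Fin d → ℝ → Ω → ℝ)
    (ψ : (Fin d → ℝ) → ℝ) (T : ℝ) (y : Fin d → ℝ) : ℝ :=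
  valueT P F r (price r δ a σm B y) ψ T

/-- The perpetual value function `V` as a function of the initial price. -/
def Vfun {d : ℕ} [mΩ : MeasurableSpace Ω] (P : Measure Ω) (F : Filtration ℝ mΩ)
    (r : ℝ) (δ : Fin d → ℝ) (a σm : Matrix (Fin d) (Fin d) ℝ) (B : Fin d → ℝ → Ω → ℝ)
    (ψ : (Fin d → ℝ) → ℝ) (y : Fin d → ℝ) : ℝ :=
  valueInf P F r (price r δ a σm B y) ψ

/-- The process `Ỹ^n`: `Ỹ^n_t = e^{-rt} V_{n-t}(X^x_t)` for `t < n` and `0` for `t ≥ n`. -/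
def Ytil {d : ℕ} [mΩ : MeasurableSpace Ω] (P : Measure Ω) (F : Filtration ℝ mΩ)
    (r : ℝ) (δ : Fin d → ℝ) (a σm : Matrix (Fin d) (Fin d) ℝ) (B : Fin d → ℝ → Ω → ℝ)
    (ψ : (Fin d → ℝ) → ℝ) (x : Fin d → ℝ) (n : ℕ) (t : ℝ) (ω : Ω) : ℝ :=
  if t < n then
    Real.exp (-r * t) * VTfun P F r δ a σm B ψ ((n : ℝ) - t) (price r δ a σm B x t ω)
  else 0

/-- The norm `‖Z‖_{x,1} = sup { E|Z_τ| : τ a finite stopping time }` (in `ℝ≥0∞`). -/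
def distD [mΩ : MeasurableSpace Ω] (P : Measure Ω) (F : Filtration ℝ mΩ)
    (Z : ℝ → Ω → ℝ) : ℝ≥0∞ :=
  ⨆ τ : {τ : Ω → ℝ // IsStoppingTime F (fun ω => (τ ω : WithTop ℝ)) ∧ ∀ ω, 0 ≤ τ ω},
    ∫⁻ ω, ENNReal.ofReal |Z (τ.1 ω) ω| ∂P


/-!
Let `ρ` be the first time in `[t, T]` at which `Ȳ¹ ≤ Ȳ²` (and `T` if there is none). Since
`Φ(x, ·)` is nonincreasing, the driver of `Ȳ¹` is at most that of `Ȳ²` on `[t, ρ)`, so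
`(Ȳ¹_t - Ȳ²_t)⁺ ≤ |Ȳ¹_T - Ȳ²_T|` up to the increments `M̄ⁱ_ρ - M̄ⁱ_t`. These have mean zero:
by (A2) the driver is integrable on `[0, ∞)`, so `|M̄_v| ≤ C + |Ȳ_0| + |Ȳ_v|` with `C`
integrable, which puts `M̄` in class (D); optional stopping then follows by localizing,
approximating `ρ` by dyadic stopping times and passing to the limit with Vitali's theorem.
Hence `E (Ȳ¹_t - Ȳ²_t)⁺ ≤ E |Ȳ¹_T - Ȳ²_T| → 0` as `T → ∞`, by class (D) and `Ȳ_T → 0`.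
By symmetry and continuity of paths the `Ȳⁱ` are indistinguishable, and then so are the `M̄ⁱ`
by the equation.
-/

open scoped Topology

theorem _root_.MeasureTheory.eLpNorm_le_add_of_norm_le_add {α : Type*} {m : MeasurableSpace α}
    {μ : Measure α} {p : ℝ≥0∞} (hp : 1 ≤ p) {f g h : α → ℝ} (hg : AEStronglyMeasurable g μ)
    (hh : AEStronglyMeasurable h μ) (hfgh : ∀ᵐ x ∂μ, ‖f x‖ ≤ ‖g x‖ + ‖h x‖) :
    eLpNorm f p μ ≤ eLpNorm g p μ + eLpNorm h p μ := by
  calc eLpNorm f p μ ≤ eLpNorm (fun x => ‖g x‖ + ‖h x‖) p μ := by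
        refine eLpNorm_mono_ae ?_
        filter_upwards [hfgh] with x hx
        exact hx.trans (le_abs_self _)
    _ ≤ eLpNorm (fun x => ‖g x‖) p μ + eLpNorm (fun x => ‖h x‖) p μ :=
        eLpNorm_add_le hg.norm hh.norm hp
    _ = eLpNorm g p μ + eLpNorm h p μ := by rw [eLpNorm_norm, eLpNorm_norm]

theorem _root_.MeasureTheory.UniformIntegrable.of_norm_le_add {α ι : Type*}
    {m : MeasurableSpace α} {μ : Measure α} {f g h : ι → α → ℝ}
    (hg : UniformIntegrable g 1 μ) (hh : UniformIntegrable h 1 μ)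
    (hf : ∀ i, AEStronglyMeasurable (f i) μ)
    (hfgh : ∀ i, ∀ᵐ x ∂μ, ‖f i x‖ ≤ ‖g i x‖ + ‖h i x‖) :
    UniformIntegrable f 1 μ := by
  obtain ⟨hgm, hgu, Cg, hCg⟩ := hg
  obtain ⟨hhm, hhu, Ch, hCh⟩ := hh
  refine ⟨hf, fun ε hε => ?_, Cg + Ch, fun i => ?_⟩
  · obtain ⟨δ₁, hδ₁, h₁⟩ := hgu (half_pos hε)
    obtain ⟨δ₂, hδ₂, h₂⟩ := hhu (half_pos hε)
    refine ⟨min δ₁ δ₂, lt_min hδ₁ hδ₂, fun i s hs hμs => ?_⟩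
    have hind : ∀ᵐ x ∂μ,
        ‖s.indicator (f i) x‖ ≤ ‖s.indicator (g i) x‖ + ‖s.indicator (h i) x‖ := by
      filter_upwards [hfgh i] with x hx
      by_cases hxs : x ∈ s
      · simpa [hxs] using hx
      · simp [hxs]
    calc eLpNorm (s.indicator (f i)) 1 μ
        ≤ eLpNorm (s.indicator (g i)) 1 μ + eLpNorm (s.indicator (h i)) 1 μ :=
          eLpNorm_le_add_of_norm_le_add le_rfl ((hgm i).indicator hs) ((hhm i).indicator hs) hind
      _ ≤ ENNReal.ofReal (ε / 2) + ENNReal.ofReal (ε / 2) :=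
          add_le_add (h₁ i s hs (hμs.trans (ENNReal.ofReal_le_ofReal (min_le_left _ _))))
            (h₂ i s hs (hμs.trans (ENNReal.ofReal_le_ofReal (min_le_right _ _))))
      _ = ENNReal.ofReal ε := by
          rw [← ENNReal.ofReal_add (half_pos hε).le (half_pos hε).le, add_halves]
  · calc eLpNorm (f i) 1 μ ≤ eLpNorm (g i) 1 μ + eLpNorm (h i) 1 μ :=
          eLpNorm_le_add_of_norm_le_add le_rfl (hgm i) (hhm i) (hfgh i)
      _ ≤ Cg + Ch := add_le_add (hCg i) (hCh i)

theorem _root_.MeasureTheory.Martingale.integral_eq_of_countable_range {Ω : Type*}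
    [mΩ : MeasurableSpace Ω] {F : Filtration ℝ mΩ} {P : Measure Ω} [IsFiniteMeasure P]
    {f : ℝ → Ω → ℝ} (hf : Martingale f F P) {η : Ω → ℝ}
    (hη : IsStoppingTime F (fun ω => (η ω : WithTop ℝ))) (hcount : (Set.range η).Countable)
    {T : ℝ} (hηT : ∀ ω, η ω ≤ T) :
    ∫ ω, f (η ω) ω ∂P = ∫ ω, f T ω ∂P := by
  have hcount' : (Set.range fun ω => (η ω : WithTop ℝ)).Countable := by
    rw [Set.range_comp' (fun x : ℝ => (x : WithTop ℝ)) η]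
    exact hcount.image _
  calc ∫ ω, f (η ω) ω ∂P = ∫ ω, stoppedValue f (fun ω => (η ω : WithTop ℝ)) ω ∂P := rfl
    _ = ∫ ω, P[f T | hη.measurableSpace] ω ∂P := integral_congr_ae
        (hf.stoppedValue_ae_eq_condExp_of_le_const_of_countable_range hη
          (fun ω => WithTop.coe_le_coe.2 (hηT ω)) hcount')
    _ = ∫ ω, f T ω ∂P := integral_condExp (hη.measurableSpace_le_of_le fun ω =>
        WithTop.coe_le_coe.2 (hηT ω))

section Dyadic

def dyadicCeil (k : ℕ) (x : ℝ) : ℝ := ⌈x * 2 ^ k⌉₊ / 2 ^ k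

lemma le_dyadicCeil (k : ℕ) (x : ℝ) : x ≤ dyadicCeil k x := by
  rw [dyadicCeil, le_div_iff₀ (by positivity)]
  exact Nat.le_ceil _

lemma dyadicCeil_le (k : ℕ) {x : ℝ} (hx : 0 ≤ x) : dyadicCeil k x ≤ x + 1 / 2 ^ k := by
  rw [dyadicCeil, div_le_iff₀ (by positivity), add_mul, one_div_mul_cancel (by positivity)]
  exact (Nat.ceil_lt_add_one (by positivity)).le

lemma tendsto_dyadicCeil {x : ℝ} (hx : 0 ≤ x) : Tendsto (dyadicCeil · x) atTop (𝓝 x) := by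
  have h : Tendsto (fun k : ℕ => x + 1 / 2 ^ k) atTop (𝓝 x) := by
    simpa [one_div, ← inv_pow] using tendsto_const_nhds.add
      (tendsto_pow_atTop_nhds_zero_of_lt_one (by norm_num : (0 : ℝ) ≤ 2⁻¹) (by norm_num))
  exact tendsto_of_tendsto_of_tendsto_of_le_of_le tendsto_const_nhds h (le_dyadicCeil · x)
    (dyadicCeil_le · hx)

lemma countable_range_dyadicCeil (k : ℕ) (ρ : Ω → ℝ) :
    (Set.range fun ω => dyadicCeil k (ρ ω)).Countable :=
  (Set.countable_range fun n : ℕ => (n : ℝ) / 2 ^ k).mono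
    (by rintro _ ⟨ω, rfl⟩; exact ⟨⌈ρ ω * 2 ^ k⌉₊, rfl⟩)

end Dyadic

section StoppedProcesses

variable [mΩ : MeasurableSpace Ω] {F : Filtration ℝ mΩ} {P : Measure Ω}

lemma measurable_of_isStoppingTime {τ : Ω → ℝ}
    (hτ : IsStoppingTime F (fun ω => (τ ω : WithTop ℝ))) : Measurable τ :=
  hτ.measurable'.untopD 0

lemma measurable_stopped_of_continuous {Y : ℝ → Ω → ℝ} (hY : ∀ t, Measurable (Y t))
    (hYc : ∀ ω, Continuous (Y · ω)) {τ : Ω → ℝ} (hτ : Measurable τ) :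
    Measurable fun ω => Y (τ ω) ω :=
  (measurable_uncurry_of_continuous_of_measurable hYc hY).comp (hτ.prodMk measurable_id)

namespace ClassD

variable {Y : ℝ → Ω → ℝ}

lemma integrable (hY : ClassD P F Y) {τ : Ω → ℝ}
    (hτ : IsStoppingTime F (fun ω => (τ ω : WithTop ℝ))) (hτ0 : ∀ ω, 0 ≤ τ ω) :
    Integrable (fun ω => Y (τ ω) ω) P :=
  memLp_one_iff_integrable.mp (UniformIntegrable.memLp hY ⟨τ, hτ, hτ0⟩)

lemma integrable_apply (hY : ClassD P F Y) {t : ℝ} (ht : 0 ≤ t) : Integrable (Y t) P :=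
  hY.integrable (isStoppingTime_const F t) fun _ => ht

lemma of_abs_le_add {M : ℝ → Ω → ℝ} (hY : ClassD P F Y) (hMa : Adapted F M)
    (hMc : ∀ ω, Continuous (M · ω)) {b : Ω → ℝ} (hb : Integrable b P)
    (hMb : ∀ᵐ ω ∂P, ∀ t, 0 ≤ t → |M t ω| ≤ b ω + |Y t ω|) :
    ClassD P F M := by
  refine UniformIntegrable.of_norm_le_add (uniformIntegrable_const le_rfl ENNReal.one_ne_top
    (memLp_one_iff_integrable.mpr hb)) hY (fun τ => ?_) fun τ => ?_
  · exact (measurable_stopped_of_continuous (fun t => (hMa t).mono (F.le t) le_rfl) hMc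
      (measurable_of_isStoppingTime τ.2.1)).aestronglyMeasurable
  · filter_upwards [hMb] with ω hω
    simpa only [Real.norm_eq_abs] using
      (hω _ (τ.2.2 ω)).trans (add_le_add_left (le_abs_self (b ω)) _)

lemma abs_sub {Y' : ℝ → Ω → ℝ} (hY : ClassD P F Y) (hY' : ClassD P F Y') :
    ClassD P F (fun t ω => |Y t ω - Y' t ω|) :=
  UniformIntegrable.of_norm_le_add hY hY' (fun τ => ((hY.1 τ).sub (hY'.1 τ)).norm)
    fun τ => Eventually.of_forall fun ω => by
      simpa only [Real.norm_eq_abs, abs_abs] using _root_.abs_sub _ _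

lemma tendsto_integral [IsFiniteMeasure P] (hY : ClassD P F Y) {σ : ℕ → Ω → ℝ}
    (hσ : ∀ n, IsStoppingTime F (fun ω => (σ n ω : WithTop ℝ))) (hσ0 : ∀ n ω, 0 ≤ σ n ω)
    {g : Ω → ℝ} (hg : Integrable g P)
    (hlim : ∀ᵐ ω ∂P, Tendsto (fun n => Y (σ n ω) ω) atTop (𝓝 (g ω))) :
    Tendsto (fun n => ∫ ω, Y (σ n ω) ω ∂P) atTop (𝓝 (∫ ω, g ω ∂P)) := by
  have hui : UnifIntegrable (fun n ω => Y (σ n ω) ω) 1 P := fun ε hε => by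
    obtain ⟨δ, hδ, h⟩ := UniformIntegrable.unifIntegrable hY hε
    exact ⟨δ, hδ, fun n => h ⟨σ n, hσ n, hσ0 n⟩⟩
  have hL1 := tendsto_Lp_finite_of_tendsto_ae le_rfl ENNReal.one_ne_top
    (fun n => hY.1 ⟨σ n, hσ n, hσ0 n⟩) (memLp_one_iff_integrable.mpr hg) hui hlim
  refine tendsto_integral_of_L1 g hg.1
    (Eventually.of_forall fun n => hY.integrable (hσ n) (hσ0 n)) ?_
  simpa only [eLpNorm_one_eq_lintegral_enorm, Pi.sub_apply] using hL1

end ClassD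

lemma isStoppingTime_dyadicCeil (k : ℕ) {ρ : Ω → ℝ}
    (hρ : IsStoppingTime F (fun ω => (ρ ω : WithTop ℝ))) (hρ0 : ∀ ω, 0 ≤ ρ ω) :
    IsStoppingTime F (fun ω => (dyadicCeil k (ρ ω) : WithTop ℝ)) := by
  intro u
  simp only [WithTop.coe_le_coe]
  have h2k : (0 : ℝ) < 2 ^ k := by positivity
  rcases lt_or_ge u 0 with hu | hu
  · convert @MeasurableSet.empty _ (F u)
    ext ω
    simpa using hu.trans_le ((hρ0 ω).trans (le_dyadicCeil k (ρ ω)))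
  have hset : {ω | dyadicCeil k (ρ ω) ≤ u} = {ω | ρ ω ≤ ⌊u * 2 ^ k⌋₊ / 2 ^ k} := by
    ext ω
    simp only [Set.mem_ofPred_eq, dyadicCeil, div_le_iff₀ h2k, le_div_iff₀ h2k]
    rw [← Nat.ceil_le, ← Nat.le_floor_iff (by positivity)]
  rw [hset]
  refine F.mono ?_ _ (by simpa using hρ _)
  rw [div_le_iff₀ h2k]
  exact Nat.floor_le (by positivity)

lemma IsLocalMartingale.integral_stopped_eq_of_countable_range [IsFiniteMeasure P]
    {M : ℝ → Ω → ℝ} (hM : IsLocalMartingale P F M) (hMD : ClassD P F M) {η : Ω → ℝ}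
    (hη : IsStoppingTime F (fun ω => (η ω : WithTop ℝ))) (hη0 : ∀ ω, 0 ≤ η ω)
    (hcount : (Set.range η).Countable) {T : ℝ} (hηT : ∀ ω, η ω ≤ T) :
    ∫ ω, M (η ω) ω ∂P = ∫ ω, M 0 ω ∂P := by
  obtain ⟨τ, hτ, hτ0, -, hτtop, hmart⟩ := hM
  have hstopped : ∀ n, ∫ ω, M (min (η ω) (τ n ω)) ω ∂P = ∫ ω, M 0 ω ∂P := fun n => by
    have hη' := (hmart n).integral_eq_of_countable_range hη hcount
      (fun ω => (hηT ω).trans (le_max_left _ 0))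
    have h0 := (hmart n).integral_eq_of_countable_range (isStoppingTime_const F 0)
      ((Set.countable_singleton 0).mono Set.range_const_subset) (fun _ => le_max_right T 0)
    simp only [min_eq_left (hτ0 n _)] at h0
    exact hη'.trans h0.symm
  have hlim := hMD.tendsto_integral (σ := fun n ω => min (η ω) (τ n ω))
    (fun n => by simpa only [WithTop.coe_min] using hη.min (hτ n))
    (fun n ω => le_min (hη0 ω) (hτ0 n ω)) (hMD.integrable hη hη0) <|
    Eventually.of_forall fun ω => tendsto_const_nhds.congr' <| by
      filter_upwards [(hτtop ω).eventually_ge_atTop (η ω)] with n hn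
      rw [min_eq_left hn]
  exact tendsto_nhds_unique hlim (by simp only [hstopped, tendsto_const_nhds])

lemma IsLocalMartingale.integral_stopped_eq [IsFiniteMeasure P] {M : ℝ → Ω → ℝ}
    (hM : IsLocalMartingale P F M) (hMD : ClassD P F M) (hMc : ∀ ω, Continuous (M · ω))
    {ρ : Ω → ℝ} (hρ : IsStoppingTime F (fun ω => (ρ ω : WithTop ℝ))) (hρ0 : ∀ ω, 0 ≤ ρ ω)
    {T : ℝ} (hρT : ∀ ω, ρ ω ≤ T) :
    ∫ ω, M (ρ ω) ω ∂P = ∫ ω, M 0 ω ∂P := by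
  have hρk0 : ∀ k ω, 0 ≤ dyadicCeil k (ρ ω) := fun k ω => (hρ0 ω).trans (le_dyadicCeil k _)
  have hρkT : ∀ k ω, dyadicCeil k (ρ ω) ≤ T + 1 := fun k ω =>
    calc dyadicCeil k (ρ ω) ≤ ρ ω + 1 / 2 ^ k := dyadicCeil_le k (hρ0 ω)
      _ ≤ T + 1 := add_le_add (hρT ω) (div_le_one_of_le₀ (one_le_pow₀ one_le_two) (by positivity))
  have hlim := hMD.tendsto_integral (σ := fun k ω => dyadicCeil k (ρ ω))
    (fun k => isStoppingTime_dyadicCeil k hρ hρ0) hρk0 (hMD.integrable hρ hρ0) <|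
    Eventually.of_forall fun ω => ((hMc ω).tendsto _).comp (tendsto_dyadicCeil (hρ0 ω))
  refine tendsto_nhds_unique hlim (tendsto_const_nhds.congr fun k => ?_)
  exact (hM.integral_stopped_eq_of_countable_range hMD (isStoppingTime_dyadicCeil k hρ hρ0)
    (hρk0 k) (countable_range_dyadicCeil k ρ) (hρkT k)).symm

lemma ae_forall_nonneg_eq_of_continuous {Y Y' : ℝ → Ω → ℝ} (hY : ∀ ω, Continuous (Y · ω))
    (hY' : ∀ ω, Continuous (Y' · ω)) (h : ∀ t, 0 ≤ t → ∀ᵐ ω ∂P, Y t ω = Y' t ω) :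
    ∀ᵐ ω ∂P, ∀ t, 0 ≤ t → Y t ω = Y' t ω := by
  filter_upwards [ae_all_iff.2 fun q : ℚ => h (max q 0) (le_max_right _ _)] with ω hω t ht
  have hext := Continuous.ext_on Rat.denseRange_cast
    ((hY ω).comp (continuous_id.max continuous_const))
    ((hY' ω).comp (continuous_id.max continuous_const)) (by rintro _ ⟨q, rfl⟩; exact hω q)
  simpa [ht] using congrFun hext t

end StoppedProcesses

section HittingTime

lemma exists_nonpos_iff_forall_exists_lt {f : ℝ → ℝ} (hf : Continuous f) {t i : ℝ} (hti : t ≤ i)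
    {D : Set ℝ} (hDsub : D ⊆ Set.Icc t i) (hDdense : Set.Icc t i ⊆ closure D) :
    (∃ j ∈ Set.Icc t i, f j ≤ 0) ↔ ∀ k : ℕ, ∃ q ∈ D, f q < 1 / (k + 1) := by
  constructor
  · rintro ⟨j, hj, hfj⟩ k
    obtain ⟨_, ⟨q, hq, rfl⟩, hdist⟩ := Metric.mem_closure_iff.1
      (image_closure_subset_closure_image hf ⟨j, hDdense hj, rfl⟩) (1 / (k + 1)) (by positivity)
    refine ⟨q, hq, ?_⟩
    rw [Real.dist_eq] at hdist
    linarith [neg_abs_le (f j - f q)]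
  · intro h
    obtain ⟨m, hm, hmin⟩ := isCompact_Icc.exists_isMinOn (Set.nonempty_Icc.2 hti) hf.continuousOn
    refine ⟨m, hm, le_of_forall_pos_lt_add fun ε hε => ?_⟩
    obtain ⟨k, hk⟩ := exists_nat_one_div_lt hε
    obtain ⟨q, hq, hfq⟩ := h k
    linarith [isMinOn_iff.1 hmin q (hDsub hq)]

lemma Icc_subset_closure_insert_Ioo_inter_range_ratCast {t i : ℝ} (hti : t ≤ i) :
    Set.Icc t i ⊆ closure (insert t (Set.Ioo t i ∩ Set.range ((↑) : ℚ → ℝ))) := by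
  rcases hti.eq_or_lt with rfl | hlt
  · simp
  rw [← closure_Ioo hlt.ne]
  exact closure_minimal ((Rat.denseRange_cast.open_subset_closure_inter isOpen_Ioo).trans
    (closure_mono (Set.subset_insert _ _))) isClosed_closure

lemma hittingBtwn_mem_of_isClosed {β : Type*} [TopologicalSpace β] {u : ℝ → Ω → β}
    {s : Set β} (hs : IsClosed s) {ω : Ω} (hu : Continuous (u · ω)) {t T : ℝ}
    (h : ∃ j ∈ Set.Icc t T, u j ω ∈ s) : u (hittingBtwn u s t T ω) ω ∈ s := by
  obtain ⟨j, hj, hjs⟩ := h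
  rw [hittingBtwn, if_pos ⟨j, hj, hjs⟩]
  exact ((isClosed_Icc.inter (hs.preimage hu)).csInf_mem ⟨j, hj, hjs⟩
    (BddBelow.inter_of_left bddBelow_Icc)).2

lemma hittingBtwn_le_iff_of_isClosed {β : Type*} [TopologicalSpace β] {u : ℝ → Ω → β}
    {s : Set β} (hs : IsClosed s) {ω : Ω} (hu : Continuous (u · ω)) {t T i : ℝ} (hi : i < T) :
    hittingBtwn u s t T ω ≤ i ↔ ∃ j ∈ Set.Icc t i, u j ω ∈ s := by
  refine ⟨fun hle => ?_, fun ⟨j, hj, hjs⟩ =>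
    (hittingBtwn_le_of_mem hj.1 (hj.2.trans hi.le) hjs).trans hj.2⟩
  by_cases h : ∃ j ∈ Set.Icc t T, u j ω ∈ s
  · exact ⟨_, ⟨le_hittingBtwn_of_exists h, hle⟩, hittingBtwn_mem_of_isClosed hs hu h⟩
  · rw [hittingBtwn, if_neg h] at hle
    exact absurd hi hle.not_gt

variable [mΩ : MeasurableSpace Ω] {F : Filtration ℝ mΩ} {Z : ℝ → Ω → ℝ}

lemma measurableSet_exists_nonpos (hZ : Adapted F Z) (hZc : ∀ ω, Continuous (Z · ω))
    {t i : ℝ} (hti : t ≤ i) :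
    MeasurableSet[F i] {ω | ∃ j ∈ Set.Icc t i, Z j ω ≤ 0} := by
  set D := insert t (Set.Ioo t i ∩ Set.range ((↑) : ℚ → ℝ))
  have hDsub : D ⊆ Set.Icc t i :=
    Set.insert_subset ⟨le_rfl, hti⟩ (Set.inter_subset_left.trans Set.Ioo_subset_Icc_self)
  have hD : D.Countable := ((Set.countable_range _).mono Set.inter_subset_right).insert t
  have hset : {ω | ∃ j ∈ Set.Icc t i, Z j ω ≤ 0}
      = ⋂ k : ℕ, ⋃ q ∈ D, {ω | Z q ω < 1 / (k + 1)} := by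
    ext ω
    simpa using exists_nonpos_iff_forall_exists_lt (hZc ω) hti hDsub
      (Icc_subset_closure_insert_Ioo_inter_range_ratCast hti)
  rw [hset]
  exact MeasurableSet.iInter fun k => MeasurableSet.biUnion hD fun q hq =>
    measurableSet_lt ((hZ q).mono (F.mono (hDsub hq).2) le_rfl) measurable_const

lemma isStoppingTime_hittingBtwn_Iic (hZ : Adapted F Z) (hZc : ∀ ω, Continuous (Z · ω))
    (t T : ℝ) :
    IsStoppingTime F (fun ω => ((hittingBtwn Z (Set.Iic 0) t T ω : ℝ) : WithTop ℝ)) := by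
  intro i
  simp only [WithTop.coe_le_coe]
  rcases le_or_gt T i with hTi | hiT
  · have hle : ∀ ω, hittingBtwn Z (Set.Iic (0 : ℝ)) t T ω ≤ i := fun ω =>
      (hittingBtwn_le ω).trans hTi
    simp [hle]
  simp only [hittingBtwn_le_iff_of_isClosed isClosed_Iic (hZc _) hiT, Set.mem_Iic]
  rcases le_or_gt t i with hti | hit
  · exact measurableSet_exists_nonpos hZ hZc hti
  · simp [Set.Icc_eq_empty_of_lt hit]

end HittingTime

section BSDE

variable {d : ℕ} {r : ℝ} {X : ℝ → Ω → (Fin d → ℝ)} {Φf : (Fin d → ℝ) → ℝ → ℝ}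
  {Y1 Y2 : ℝ → Ω → ℝ} {t T : ℝ}

def driver (r : ℝ) (X : ℝ → Ω → (Fin d → ℝ)) (Φf : (Fin d → ℝ) → ℝ → ℝ) (Y : ℝ → Ω → ℝ)
    (s : ℝ) (ω : Ω) : ℝ :=
  Real.exp (-r * s) * Φf (X s ω) (Real.exp (r * s) * Y s ω)

lemma driver_le_driver_of_lt (hΦ : ∀ x, Antitone (Φf x)) {Y Y' : ℝ → Ω → ℝ} {s : ℝ} {ω : Ω}
    (h : Y' s ω < Y s ω) : driver r X Φf Y s ω ≤ driver r X Φf Y' s ω :=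
  mul_le_mul_of_nonneg_left (hΦ _ (mul_le_mul_of_nonneg_left h.le (Real.exp_pos _).le))
    (Real.exp_pos _).le

def discountedIntegral (r : ℝ) (G : (Fin d → ℝ) → ℝ) (X : ℝ → Ω → (Fin d → ℝ)) (ω : Ω) : ℝ≥0∞ :=
  ∫⁻ s in Set.Ioi 0, ENNReal.ofReal (Real.exp (-r * s) * G (X s ω))

lemma abs_integral_driver_le {G : (Fin d → ℝ) → ℝ} (hG : ∀ x y, |Φf x y| ≤ G x)
    {Y : ℝ → Ω → ℝ} {ω : Ω} (hC : discountedIntegral r G X ω ≠ ⊤) {v : ℝ} (hv : 0 ≤ v) :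
    |∫ s in 0..v, driver r X Φf Y s ω| ≤ (discountedIntegral r G X ω).toReal := by
  rw [intervalIntegral.integral_of_le hv, ← Real.norm_eq_abs]
  refine (norm_integral_le_lintegral_norm _).trans (ENNReal.toReal_mono hC ?_)
  refine (lintegral_mono fun s => ENNReal.ofReal_le_ofReal ?_).trans
    (lintegral_mono_set Set.Ioc_subset_Ioi_self)
  rw [driver, norm_mul, Real.norm_of_nonneg (Real.exp_pos _).le]
  exact mul_le_mul_of_nonneg_left (hG _ _) (Real.exp_pos _).le

/-- The first time in `[t, T]` at which `Y1 ≤ Y2`, and `T` if there is none. -/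
def crossingTime (Y1 Y2 : ℝ → Ω → ℝ) (t T : ℝ) : Ω → ℝ :=
  hittingBtwn (fun s ω => Y1 s ω - Y2 s ω) (Set.Iic 0) t T

lemma sub_crossingTime_le_abs (hY1 : ∀ ω, Continuous (Y1 · ω)) (hY2 : ∀ ω, Continuous (Y2 · ω))
    (ω : Ω) :
    Y1 (crossingTime Y1 Y2 t T ω) ω - Y2 (crossingTime Y1 Y2 t T ω) ω ≤ |Y1 T ω - Y2 T ω| := by
  by_cases h : ∃ j ∈ Set.Icc t T, Y1 j ω - Y2 j ω ∈ Set.Iic 0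
  · exact (hittingBtwn_mem_of_isClosed (u := fun s ω => Y1 s ω - Y2 s ω) isClosed_Iic
      ((hY1 ω).sub (hY2 ω)) h).trans (abs_nonneg _)
  · rw [crossingTime, hittingBtwn, if_neg h]
    exact le_abs_self _

lemma crossingTime_eq_self (htT : t ≤ T) {ω : Ω} (h : Y1 t ω ≤ Y2 t ω) :
    crossingTime Y1 Y2 t T ω = t :=
  le_antisymm (hittingBtwn_le_of_mem le_rfl htT (by simpa using h)) (le_hittingBtwn htT ω)

variable [mΩ : MeasurableSpace Ω] {F : Filtration ℝ mΩ} {P : Measure Ω}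

lemma measurable_discountedIntegral {G : (Fin d → ℝ) → ℝ} (hG : Measurable G)
    (hX : Measurable (Function.uncurry X)) : Measurable (discountedIntegral r G X) := by
  refine Measurable.lintegral_prod_right' (f := fun p : Ω × ℝ =>
    ENNReal.ofReal (Real.exp (-r * p.2) * G (X p.2 p.1))) ?_
  exact ENNReal.measurable_ofReal.comp ((Real.measurable_exp.comp (measurable_snd.const_mul _)).mul
    (hG.comp (hX.comp measurable_swap)))

namespace BSDESol

variable {Y M M1 M2 : ℝ → Ω → ℝ}

lemma ae_intervalIntegrable (h : BSDESol P F r X Φf Y M) :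
    ∀ᵐ ω ∂P, ∀ u v : ℝ, 0 ≤ u → 0 ≤ v →
      IntervalIntegrable (driver r X Φf Y · ω) volume u v := by
  filter_upwards [h.intFin] with ω hω u v hu hv
  have hT : 0 < max u v + 1 := (hu.trans (le_max_left u v)).trans_lt (lt_add_one _)
  exact ((hω _ hT).mono_set (Set.uIcc_subset_Icc ⟨hu, (le_max_left u v).trans (by simp)⟩
    ⟨hv, (le_max_right u v).trans (by simp)⟩)).intervalIntegrable

lemma ae_sub_add_sub_eq_integral (h : BSDESol P F r X Φf Y M) :
    ∀ᵐ ω ∂P, ∀ u v : ℝ, 0 ≤ u → u ≤ v →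
      Y u ω - Y v ω + (M v ω - M u ω) = ∫ s in u..v, driver r X Φf Y s ω := by
  filter_upwards [h.ae_intervalIntegrable,
    ae_all_iff.2 fun n : ℕ => h.eqn (n + 1) n.cast_add_one_pos] with ω hint heqn u v hu huv
  obtain ⟨n, hn⟩ := exists_nat_gt v
  have hvn : v ≤ n + 1 := by linarith
  have hu' := heqn n u ⟨hu, huv.trans hvn⟩
  have hv' := heqn n v ⟨hu.trans huv, hvn⟩
  have hadd := intervalIntegral.integral_add_adjacent_intervals (hint u v hu (hu.trans huv))
    (hint v (n + 1) (hu.trans huv) n.cast_add_one_pos.le)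
  simp only [driver] at *
  linarith

lemma ae_abs_le (h : BSDESol P F r X Φf Y M) {G : (Fin d → ℝ) → ℝ}
    (hG : ∀ x y, |Φf x y| ≤ G x) (hC : ∀ᵐ ω ∂P, discountedIntegral r G X ω ≠ ⊤) :
    ∀ᵐ ω ∂P, ∀ v, 0 ≤ v →
      |M v ω| ≤ ((discountedIntegral r G X ω).toReal + |Y 0 ω|) + |Y v ω| := by
  filter_upwards [h.ae_sub_add_sub_eq_integral, hC] with ω heq hCω v hv
  have hMv := heq 0 v le_rfl hv
  rw [h.M0 ω] at hMv
  have hint := abs_integral_driver_le hG (Y := Y) hCω hv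
  calc |M v ω| = |(∫ s in 0..v, driver r X Φf Y s ω) - Y 0 ω + Y v ω| := by
        congr 1; linarith
    _ ≤ |∫ s in 0..v, driver r X Φf Y s ω| + |Y 0 ω| + |Y v ω| :=
        (abs_add_le _ _).trans (add_le_add_left (abs_sub _ _) _)
    _ ≤ _ := by linarith

lemma classD_martingale (h : BSDESol P F r X Φf Y M) {G : (Fin d → ℝ) → ℝ}
    (hG : ∀ x y, |Φf x y| ≤ G x) (hGm : Measurable G) (hX : Measurable (Function.uncurry X))
    (hGX : ∫⁻ ω, discountedIntegral r G X ω ∂P ≠ ⊤) : ClassD P F M := by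
  have hCm := measurable_discountedIntegral (r := r) hGm hX
  refine h.classD.of_abs_le_add h.adaptedM h.contM ?_
    (h.ae_abs_le hG ((ae_lt_top hCm hGX).mono fun _ => LT.lt.ne))
  exact (integrable_toReal_of_lintegral_ne_top hCm.aemeasurable hGX).add
    (h.classD.integrable_apply le_rfl).abs

lemma ae_max_sub_le (h1 : BSDESol P F r X Φf Y1 M1) (h2 : BSDESol P F r X Φf Y2 M2)
    (hΦ : ∀ x, Antitone (Φf x)) (ht : 0 ≤ t) (htT : t ≤ T) :
    ∀ᵐ ω ∂P, max (Y1 t ω - Y2 t ω) 0 ≤ |Y1 T ω - Y2 T ω|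
      - ((M1 (crossingTime Y1 Y2 t T ω) ω - M1 t ω)
        - (M2 (crossingTime Y1 Y2 t T ω) ω - M2 t ω)) := by
  filter_upwards [h1.ae_intervalIntegrable, h2.ae_intervalIntegrable,
    h1.ae_sub_add_sub_eq_integral, h2.ae_sub_add_sub_eq_integral] with ω hi1 hi2 he1 he2
  set ρ := crossingTime Y1 Y2 t T ω
  rcases le_or_gt (Y1 t ω - Y2 t ω) 0 with hle | hpos
  · rw [show ρ = t from crossingTime_eq_self htT (sub_nonpos.1 hle), max_eq_right hle]
    simp
  have htρ : t ≤ ρ := le_hittingBtwn htT ω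
  -- before `ρ` the two solutions have not crossed, so the driver of `Y1` is the smaller one
  have hdrivers : ∫ s in t..ρ, driver r X Φf Y1 s ω ≤ ∫ s in t..ρ, driver r X Φf Y2 s ω :=
    intervalIntegral.integral_mono_on_of_le_Ioo htρ (hi1 t ρ ht (ht.trans htρ))
      (hi2 t ρ ht (ht.trans htρ)) fun s hs => driver_le_driver_of_lt hΦ <| by
        simpa using notMem_of_lt_hittingBtwn hs.2 hs.1.le
  have hend := sub_crossingTime_le_abs (t := t) (T := T) h1.contY h2.contY ω
  rw [max_eq_left hpos.le]
  linarith [he1 t ρ ht htρ, he2 t ρ ht htρ]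

lemma integral_max_sub_le [IsFiniteMeasure P] (h1 : BSDESol P F r X Φf Y1 M1)
    (h2 : BSDESol P F r X Φf Y2 M2) (hΦ : ∀ x, Antitone (Φf x)) (hM1 : ClassD P F M1)
    (hM2 : ClassD P F M2) (ht : 0 ≤ t) (htT : t ≤ T) :
    ∫ ω, max (Y1 t ω - Y2 t ω) 0 ∂P ≤ ∫ ω, |Y1 T ω - Y2 T ω| ∂P := by
  set ρ := crossingTime Y1 Y2 t T
  have hρ : IsStoppingTime F (fun ω => (ρ ω : WithTop ℝ)) :=
    isStoppingTime_hittingBtwn_Iic (h1.adaptedY.sub h2.adaptedY)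
      (fun ω => (h1.contY ω).sub (h2.contY ω)) t T
  have hρ0 : ∀ ω, 0 ≤ ρ ω := fun ω => ht.trans (le_hittingBtwn htT ω)
  have hρT : ∀ ω, ρ ω ≤ T := hittingBtwn_le
  have optional_stopping : ∀ {M : ℝ → Ω → ℝ}, IsLocalMartingale P F M → ClassD P F M →
      (∀ ω, Continuous (M · ω)) → ∫ ω, M (ρ ω) ω ∂P - ∫ ω, M t ω ∂P = 0 := fun hM hMD hMc => by
    rw [hM.integral_stopped_eq hMD hMc hρ hρ0 hρT,
      hM.integral_stopped_eq (ρ := fun _ => t) hMD hMc (isStoppingTime_const F t) (fun _ => ht)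
        (fun _ => htT), sub_self]
  have hN1 : Integrable (fun ω => M1 (ρ ω) ω - M1 t ω) P :=
    (hM1.integrable hρ hρ0).sub (hM1.integrable_apply ht)
  have hN2 : Integrable (fun ω => M2 (ρ ω) ω - M2 t ω) P :=
    (hM2.integrable hρ hρ0).sub (hM2.integrable_apply ht)
  have hN : Integrable (fun ω => (M1 (ρ ω) ω - M1 t ω) - (M2 (ρ ω) ω - M2 t ω)) P :=
    hN1.sub hN2
  have hZT : Integrable (fun ω => |Y1 T ω - Y2 T ω|) P :=
    ((h1.classD.integrable_apply (ht.trans htT)).sub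
      (h2.classD.integrable_apply (ht.trans htT))).abs
  calc ∫ ω, max (Y1 t ω - Y2 t ω) 0 ∂P
      ≤ ∫ ω, |Y1 T ω - Y2 T ω| - ((M1 (ρ ω) ω - M1 t ω) - (M2 (ρ ω) ω - M2 t ω)) ∂P :=
        integral_mono_ae ((h1.classD.integrable_apply ht).sub
          (h2.classD.integrable_apply ht)).pos_part (hZT.sub hN)
          (h1.ae_max_sub_le h2 hΦ ht htT)
    _ = ∫ ω, |Y1 T ω - Y2 T ω| ∂P := by
        rw [integral_sub hZT hN, integral_sub hN1 hN2,
          integral_sub (hM1.integrable hρ hρ0) (hM1.integrable_apply ht),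
          integral_sub (hM2.integrable hρ hρ0) (hM2.integrable_apply ht),
          optional_stopping h1.locMart hM1 h1.contM, optional_stopping h2.locMart hM2 h2.contM]
        ring

lemma ae_le [IsFiniteMeasure P] (h1 : BSDESol P F r X Φf Y1 M1)
    (h2 : BSDESol P F r X Φf Y2 M2) (hΦ : ∀ x, Antitone (Φf x)) (hM1 : ClassD P F M1)
    (hM2 : ClassD P F M2) (ht : 0 ≤ t) :
    ∀ᵐ ω ∂P, Y1 t ω ≤ Y2 t ω := by
  have hlim : Tendsto (fun n : ℕ => ∫ ω, |Y1 n ω - Y2 n ω| ∂P) atTop (𝓝 0) := by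
    simpa using (h1.classD.abs_sub h2.classD).tendsto_integral (σ := fun n _ => n)
      (fun n => isStoppingTime_const F _) (fun n _ => n.cast_nonneg) (integrable_zero Ω ℝ P) <| by
        filter_upwards [h1.limY, h2.limY] with ω hl1 hl2
        simpa [Function.comp_def] using ((hl1.sub hl2).abs).comp tendsto_natCast_atTop_atTop
  have hpos := ((h1.classD.integrable_apply ht).sub (h2.classD.integrable_apply ht)).pos_part
  have hint : ∫ ω, max (Y1 t ω - Y2 t ω) 0 ∂P = 0 :=
    le_antisymm (ge_of_tendsto hlim <| (eventually_ge_atTop ⌈t⌉₊).mono fun n hn =>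
        integral_max_sub_le h1 h2 hΦ hM1 hM2 ht (Nat.ceil_le.1 hn))
      (integral_nonneg fun ω => le_max_right _ _)
  filter_upwards [(integral_eq_zero_iff_of_nonneg (fun ω => le_max_right _ _) hpos).1 hint]
    with ω hω
  simpa using hω

lemma indistinguishable [IsFiniteMeasure P] (h1 : BSDESol P F r X Φf Y1 M1)
    (h2 : BSDESol P F r X Φf Y2 M2) (hΦ : ∀ x, Antitone (Φf x)) (hM1 : ClassD P F M1)
    (hM2 : ClassD P F M2) :
    (∀ᵐ ω ∂P, ∀ t : ℝ, 0 ≤ t → Y1 t ω = Y2 t ω) ∧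
      (∀ᵐ ω ∂P, ∀ t : ℝ, 0 ≤ t → M1 t ω = M2 t ω) := by
  have hY : ∀ᵐ ω ∂P, ∀ t : ℝ, 0 ≤ t → Y1 t ω = Y2 t ω :=
    ae_forall_nonneg_eq_of_continuous h1.contY h2.contY fun t ht => by
      filter_upwards [h1.ae_le h2 hΦ hM1 hM2 ht, h2.ae_le h1 hΦ hM2 hM1 ht] with ω h12 h21
      exact le_antisymm h12 h21
  refine ⟨hY, ?_⟩
  filter_upwards [hY, h1.ae_sub_add_sub_eq_integral, h2.ae_sub_add_sub_eq_integral]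
    with ω hY he1 he2 t ht
  have hdrivers : ∫ s in 0..t, driver r X Φf Y1 s ω = ∫ s in 0..t, driver r X Φf Y2 s ω :=
    intervalIntegral.integral_congr fun s hs => by
      rw [Set.uIcc_of_le ht] at hs
      simp only [driver, hY s hs.1]
  linarith [he1 0 t le_rfl ht, he2 0 t le_rfl ht, h1.M0 ω, h2.M0 ω, hY 0 le_rfl, hY t ht]

end BSDESol

end BSDE

lemma A1.continuous {d : ℕ} {ψ : (Fin d → ℝ) → ℝ} {L : ℝ} (hψ : A1 ψ L) : Continuous ψ :=
  continuousOn_univ.1 (hψ.convex.continuousOn isOpen_univ)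

lemma measurable_psiMinus {d : ℕ} (r : ℝ) (δ : Fin d → ℝ) (a : Matrix (Fin d) (Fin d) ℝ)
    {ψ : (Fin d → ℝ) → ℝ} (hψ : Measurable ψ) : Measurable (PsiMinus r δ a ψ) := by
  have hD2 : ∀ i j, Measurable fun x : Fin d → ℝ =>
      fderiv ℝ (fderiv ℝ ψ) x (Pi.single i 1) (Pi.single j 1) := fun i j =>
    (ContinuousLinearMap.measurable_apply (Pi.single j 1)).comp
      (measurable_fderiv_apply_const ℝ (fderiv ℝ ψ) (Pi.single i 1))
  refine (Measurable.ite ((measurableSet_of_differentiableAt ℝ ψ).inter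
    (measurableSet_of_differentiableAt ℝ (fderiv ℝ ψ))) ?_ measurable_const).neg.max
    measurable_const
  refine ((hψ.const_mul _).add (Finset.measurable_sum _ fun i _ => ?_)).add
    ((Finset.measurable_sum _ fun i _ => Finset.measurable_sum _ fun j _ => ?_).const_mul _)
  · exact ((measurable_pi_apply i).const_mul _).mul (measurable_fderiv_apply_const ℝ ψ _)
  · exact (((measurable_pi_apply i).const_mul _).mul (measurable_pi_apply j)).mul (hD2 i j)

lemma antitone_phi {d : ℕ} (r : ℝ) (δ : Fin d → ℝ) (a : Matrix (Fin d) (Fin d) ℝ)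
    (ψ : (Fin d → ℝ) → ℝ) (x : Fin d → ℝ) : Antitone (Phi r δ a ψ x) := fun y y' hyy' => by
  have hΨ : 0 ≤ PsiMinus r δ a ψ x := le_max_right _ _
  unfold Phi
  split_ifs with h' h
  · rfl
  · exact absurd (hyy'.trans h') h
  · simpa using hΨ
  · rfl

lemma abs_phi_le {d : ℕ} (r : ℝ) (δ : Fin d → ℝ) (a : Matrix (Fin d) (Fin d) ℝ)
    (ψ : (Fin d → ℝ) → ℝ) (x : Fin d → ℝ) (y : ℝ) :
    |Phi r δ a ψ x y| ≤ PsiMinus r δ a ψ x := by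
  have hΨ : 0 ≤ PsiMinus r δ a ψ x := le_max_right _ _
  unfold Phi
  split_ifs <;> simp [abs_of_nonneg hΨ, hΨ]

lemma measurable_uncurry_price [MeasurableSpace Ω] {d : ℕ} (r : ℝ) (δ : Fin d → ℝ)
    (a σm : Matrix (Fin d) (Fin d) ℝ) {B : Fin d → ℝ → Ω → ℝ}
    (hBc : ∀ i ω, Continuous fun t => B i t ω) (hBm : ∀ i t, Measurable (B i t))
    (x : Fin d → ℝ) : Measurable (Function.uncurry (price r δ a σm B x)) := by
  refine measurable_uncurry_of_continuous_of_measurable (fun ω => ?_) (fun t => ?_) <;>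
    unfold price
  · fun_prop
  · fun_prop

theorem bsde_uniqueness_general {Ω : Type*} [mΩ : MeasurableSpace Ω] {d : ℕ}
    (r : ℝ) (δ : Fin d → ℝ)
    (a σm : Matrix (Fin d) (Fin d) ℝ)
    (P : Measure Ω) [IsProbabilityMeasure P] (F : Filtration ℝ mΩ)
    (B : Fin d → ℝ → Ω → ℝ) (hB : IsStdBM P F B)
    (ψ : (Fin d → ℝ) → ℝ) (L : ℝ) (hψ : A1 ψ L)
    (x : Fin d → ℝ)
    (hA2 : A2at P r δ a ψ (price r δ a σm B x))
    (Y1 M1 Y2 M2 : ℝ → Ω → ℝ)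
    (h1 : BSDESol P F r (price r δ a σm B x) (Phi r δ a ψ) Y1 M1)
    (h2 : BSDESol P F r (price r δ a σm B x) (Phi r δ a ψ) Y2 M2) :
    (∀ᵐ ω ∂P, ∀ t : ℝ, 0 ≤ t → Y1 t ω = Y2 t ω) ∧
    (∀ᵐ ω ∂P, ∀ t : ℝ, 0 ≤ t → M1 t ω = M2 t ω) := by
  obtain ⟨-, hBc, hBa, -⟩ := hB
  have hX := measurable_uncurry_price r δ a σm hBc
    (fun i t => (hBa i t).mono (F.le t) le_rfl) x
  have hΨ := measurable_psiMinus r δ a hψ.continuous.measurable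
  exact h1.indistinguishable h2 (antitone_phi r δ a ψ)
    (h1.classD_martingale (abs_phi_le r δ a ψ) hΨ hX hA2.2.ne)
    (h2.classD_martingale (abs_phi_le r δ a ψ) hΨ hX hA2.2.ne)

theorem bsde_uniqueness {Ω : Type*} [mΩ : MeasurableSpace Ω] {d : ℕ} (hd : 1 ≤ d)
    (r : ℝ) (hr : 0 ≤ r) (δ : Fin d → ℝ) (hδ : ∀ i, 0 ≤ δ i)
    (a σm : Matrix (Fin d) (Fin d) ℝ)
    (ha : a.IsSymm) (haP : a.PosDef) (hσs : σm.IsSymm) (hσP : σm.PosDef)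
    (hsq : σm * σm = a)
    (P : Measure Ω) [IsProbabilityMeasure P] (F : Filtration ℝ mΩ)
    (B : Fin d → ℝ → Ω → ℝ) (hB : IsStdBM P F B)
    (ψ : (Fin d → ℝ) → ℝ) (L : ℝ) (hψ : A1 ψ L)
    (x : Fin d → ℝ) (hx : x ∈ posOrth d)
    (hA2 : A2at P r δ a ψ (price r δ a σm B x))
    (Y1 M1 Y2 M2 : ℝ → Ω → ℝ)
    (h1 : BSDESol P F r (price r δ a σm B x) (Phi r δ a ψ) Y1 M1)
    (h2 : BSDESol P F r (price r δ a σm B x) (Phi r δ a ψ) Y2 M2) :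
    (∀ᵐ ω ∂P, ∀ t : ℝ, 0 ≤ t → Y1 t ω = Y2 t ω) ∧
    (∀ᵐ ω ∂P, ∀ t : ℝ, 0 ≤ t → M1 t ω = M2 t ω) :=
  bsde_uniqueness_general (mΩ := mΩ) r δ a σm P F B hB ψ L hψ x hA2 Y1 M1 Y2 M2 h1 h2

end Perp
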